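/- Let q ∈ [−1,1], β_n = sqrt(∑_{j=0}^{n} q^j), C = ∑_{n=0}^{L-1} β_n |e_n⟩⟨e_{n+1}| on ℂ^{L+1}, and K = (β_L²/(L+1)) |e_L⟩⟨e_L|. Then C C† − q C† C = 1 − (L+1) K. -/

import Mathlib

/-!
`C` is a weighted shift, so `C Cᴴ` and `Cᴴ C` are diagonal, carrying the squared weights
`β_n² = ∑_{j ≤ n} q^j` on the diagonal entries `0, …, L-1` and `1, …, L` respectively. The
diagonal entries of `C Cᴴ - q Cᴴ C` are therefore `β_0² = 1` and `β_n² - q β_{n-1}² = 1`, except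
the last one, which is `-q β_{L-1}² = 1 - β_L²`.
-/

open Matrix Finset

theorem geom_sum_nonneg_of_neg_one_le {R : Type*} [Ring R] [LinearOrder R]
    [IsStrictOrderedRing R] {x : R} (hx : -1 ≤ x) (n : ℕ) : 0 ≤ ∑ i ∈ range n, x ^ i := by
  rcases n.eq_zero_or_pos with rfl | hn
  · simp
  · exact not_lt.1 fun h => ((geom_sum_neg_iff hn.ne').1 h).2.not_ge (neg_le_iff_add_nonneg.1 hx)

namespace Matrix

variable {R : Type*}

section Shift

variable [Semiring R] [StarRing R] {L : ℕ} (w : Fin L → R)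

theorem shift_mul_conjTranspose_shift :
    (∑ n : Fin L, single n.castSucc n.succ (w n)) *
        (∑ n : Fin L, single n.castSucc n.succ (w n))ᴴ =
      ∑ n : Fin L, single n.castSucc n.castSucc (w n * star (w n)) := by
  rw [conjTranspose_sum, sum_mul_sum]
  refine sum_congr rfl fun n _ => ?_
  rw [sum_eq_single n]
  · simp [conjTranspose_single]
  · intro m _ hmn
    simp [conjTranspose_single, hmn.symm]
  · simp

theorem conjTranspose_shift_mul_shift :
    (∑ n : Fin L, single n.castSucc n.succ (w n))ᴴ *
        (∑ n : Fin L, single n.castSucc n.succ (w n)) =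
      ∑ n : Fin L, single n.succ n.succ (star (w n) * w n) := by
  rw [conjTranspose_sum, sum_mul_sum]
  refine sum_congr rfl fun n _ => ?_
  rw [sum_eq_single n]
  · simp [conjTranspose_single]
  · intro m _ hmn
    simp [conjTranspose_single, hmn.symm]
  · simp

end Shift

/-- Telescoping: both sums reassemble `∑ i, single i i (f i)` over `Fin (L + 1)`, once with the
last term split off and once with the first. -/
theorem sum_single_castSucc_sub_smul_sum_single_succ [CommRing R] {L : ℕ} (q : R) (f : ℕ → R)
    (h0 : f 0 = 1) (hrec : ∀ n, f (n + 1) = q * f n + 1) :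
    ∑ n : Fin L, single n.castSucc n.castSucc (f n) - q • ∑ n : Fin L, single n.succ n.succ (f n) =
      1 - single (Fin.last L) (Fin.last L) (f L) := by
  have hcast := Fin.sum_univ_castSucc fun i : Fin (L + 1) => single i i (f i)
  have hsucc := Fin.sum_univ_succ fun i : Fin (L + 1) => single i i (f i)
  have hone := Fin.sum_univ_succ fun i : Fin (L + 1) => single i i (1 : R)
  simp only [Fin.val_castSucc, Fin.val_last, Fin.val_succ, Fin.val_zero, h0, hrec,
    single_add, sum_add_distrib, sum_single_one] at hcast hsucc hone
  rw [smul_sum]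
  simp only [smul_single, smul_eq_mul]
  rw [hone, eq_sub_iff_add_eq, sub_add_eq_add_sub, ← hcast, hsucc]
  abel

end Matrix

theorem TQ_qmutator_general (L : ℕ) (q : ℝ) (hq1 : -1 ≤ q)
    (β : ℕ → ℝ) (hβ : ∀ n, β n = Real.sqrt (∑ j ∈ Finset.range (n+1), q ^ j))
    (C : Matrix (Fin (L+1)) (Fin (L+1)) ℂ)
    (hC : C = ∑ n : Fin L, ((β n : ℝ) : ℂ) •
      Matrix.single n.castSucc n.succ 1)
    (K : Matrix (Fin (L+1)) (Fin (L+1)) ℂ)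
    (hK : K = (((β L) ^ 2 / (L+1) : ℝ) : ℂ) •
      Matrix.single (Fin.last L) (Fin.last L) 1) :
    C * Cᴴ - (q : ℂ) • (Cᴴ * C) = 1 - ((L+1 : ℕ) : ℂ) • K := by
  have hβsq (n : ℕ) : β n ^ 2 = ∑ j ∈ range (n + 1), q ^ j := by
    rw [hβ, Real.sq_sqrt (geom_sum_nonneg_of_neg_one_le hq1 _)]
  have hC' : C = ∑ n : Fin L, single n.castSucc n.succ ((β n : ℂ)) := by
    simp only [hC, smul_single, smul_eq_mul, mul_one]
  have hK' : ((L + 1 : ℕ) : ℂ) • K = single (Fin.last L) (Fin.last L) ((β L : ℂ) ^ 2) := by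
    rw [hK, smul_smul, smul_single, smul_eq_mul, mul_one]
    congr 1
    push_cast
    field_simp
  rw [hC', hK', shift_mul_conjTranspose_shift, conjTranspose_shift_mul_shift]
  simp only [Complex.star_def, Complex.conj_ofReal, ← sq]
  refine sum_single_castSucc_sub_smul_sum_single_succ (q : ℂ) (fun n => (β n : ℂ) ^ 2) ?_ ?_
  · simp [← Complex.ofReal_pow, hβsq]
  · intro n
    simp only [← Complex.ofReal_pow, hβsq, geom_sum_succ]
    push_cast
    ring

theorem TQ_qmutator (L : ℕ) (q : ℝ) (hq1 : -1 ≤ q) (hq2 : q ≤ 1)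
    (β : ℕ → ℝ) (hβ : ∀ n, β n = Real.sqrt (∑ j ∈ Finset.range (n+1), q ^ j))
    (C : Matrix (Fin (L+1)) (Fin (L+1)) ℂ)
    (hC : C = ∑ n : Fin L, ((β n : ℝ) : ℂ) •
      Matrix.single n.castSucc n.succ 1)
    (K : Matrix (Fin (L+1)) (Fin (L+1)) ℂ)
    (hK : K = (((β L) ^ 2 / (L+1) : ℝ) : ℂ) •
      Matrix.single (Fin.last L) (Fin.last L) 1) :
    C * Cᴴ - (q : ℂ) • (Cᴴ * C) = 1 - ((L+1 : ℕ) : ℂ) • K :=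
  TQ_qmutator_general L q hq1 β hβ C hC K hK
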